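/- arXiv:math/0508631 — 4 statements merged into one kernel-verified Lean document; each statement's English description precedes it below -/
import Mathlib

section
/- Let S be a unitary numerical semigroup generated by {a1,a2,a3,a4} with a1=q1D, and let T = ⟨a1,a2,a3⟩. Then g(S) ≥ g(T) − (q1−1)·a1; equivalently, g(T) − (q1−1)·a1 ∉ S. -/
def SG (a1 a2 a3 a4 : ℕ) : Set ℤ :=
  {s | ∃ t1 t2 t3 t4 : ℕ, s = t1 * a1 + t2 * a2 + t3 * a3 + t4 * a4}

def TG (a1 a2 a3 : ℕ) : Set ℤ :=
  {s | ∃ t1 t2 t3 : ℕ, s = t1 * a1 + t2 * a2 + t3 * a3}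

theorem stmt_9 (a1 a2 a3 a4 D E q1 q2 q3 q4 : ℕ)
(h1 : 0 < a1) (h12 : a1 < a2) (h23 : a2 < a3) (h34 : a3 < a4)
    (hgcd : Nat.gcd (Nat.gcd a1 a2) (Nat.gcd a3 a4) = 1)
    (hd12 : ¬ a1 ∣ a2) (hd13 : ¬ a1 ∣ a3) (hd14 : ¬ a1 ∣ a4)
    (hd23 : ¬ a2 ∣ a3) (hd24 : ¬ a2 ∣ a4) (hd34 : ¬ a3 ∣ a4)
    (hsum : a1 + a4 = a2 + a3)
(hD : D = Nat.gcd a1 a4) (hE : E = Nat.gcd a2 a3)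
    (hq1 : a1 = q1 * D) (hq2 : a2 = q2 * E) (hq3 : a3 = q3 * E) (hq4 : a4 = q4 * D)
    (hu : a1 + a4 = Nat.gcd a1 a4 * Nat.gcd a2 a3)
    (gT gS : ℤ)
    (hgT : IsGreatest {n : ℤ | n ∉ TG a1 a2 a3} gT)
    (hgS : IsGreatest {n : ℤ | n ∉ SG a1 a2 a3 a4} gS) :
    gT - (q1 - 1 : ℕ) * a1 ∉ SG a1 a2 a3 a4 ∧ gS ≥ gT - (q1 - 1 : ℕ) * a1 := by
  have hq1pos : 0 < q1 := by
    rcases Nat.eq_zero_or_pos q1 with h | h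
    · subst h; simp at hq1; omega
    · exact h
  have hqid : q1 * a4 = q4 * a1 := by rw [hq1, hq4]; ring
  have hsumZ : (a1 : ℤ) + a4 = a2 + a3 := by exact_mod_cast hsum
  have hqidZ : (q1 : ℤ) * a4 = q4 * a1 := by exact_mod_cast hqid
  have hcast : ((q1 - 1 : ℕ) : ℤ) = (q1 : ℤ) - 1 := by omega
  have key : gT - (q1 - 1 : ℕ) * a1 ∉ SG a1 a2 a3 a4 := by
    intro hmem
    obtain ⟨t1, t2, t3, t4, heq⟩ := hmem
    induction t4 using Nat.strong_induction_on generalizing t1 t2 t3 with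
    | _ t4 ih =>
      by_cases hc : t4 < q1
      · apply hgT.1
        refine ⟨t1 + (q1 - 1 - t4), t2 + t4, t3 + t4, ?_⟩
        have h1' : ((q1 - 1 - t4 : ℕ) : ℤ) = (q1 : ℤ) - 1 - t4 := by omega
        rw [hcast] at heq
        push_cast [h1']
        linear_combination heq + (t4 : ℤ) * hsumZ
      · have ht4 : q1 ≤ t4 := by omega
        apply ih (t4 - q1) (by omega) (t1 + q4) t2 t3
        have h2' : ((t4 - q1 : ℕ) : ℤ) = (t4 : ℤ) - q1 := by omega
        rw [hcast] at heq ⊢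
        push_cast [h2']
        linear_combination heq + hqidZ
  exact ⟨key, hgS.2 key⟩
end

section
/- Let S be a unitary numerical semigroup generated by {a1,a2,a3,a4} with a1=q1D, and let T = ⟨a1,a2,a3⟩. Then the number of elements in S \ T is at least ((q1−1)/2)·a1, i.e., |S \ T| ≥ (q1−1)·q1·D/2. -/
def Mrep (q2 q3 v : ℕ) : Prop := ∃ y z : ℕ, v = y * q2 + z * q3

open scoped Classical in
noncomputable def desc (q2 q3 s v : ℕ) : ℕ :=
  if h : 0 < s ∧ ∃ u, Mrep q2 q3 u ∧ v = u + s then desc q2 q3 s (v - s) else v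
termination_by v
decreasing_by
  obtain ⟨hs, u, hu, hv⟩ := h
  omega

lemma desc_add (q2 q3 s : ℕ) : ∀ v : ℕ, ∃ j : ℕ, v = desc q2 q3 s v + j * s := by
  intro v
  induction v using Nat.strong_induction_on with
  | _ v ih =>
    rw [desc]
    split_ifs with h
    · obtain ⟨hs, u, hu, hv⟩ := h
      obtain ⟨j, hj⟩ := ih (v - s) (by omega)
      refine ⟨j + 1, ?_⟩
      have h1 : (j + 1) * s = j * s + s := by ring
      rw [h1]
      omega
    · exact ⟨0, by omega⟩

lemma desc_not (q2 q3 s : ℕ) (hs : 0 < s) :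
    ∀ v : ℕ, ¬ ∃ u, Mrep q2 q3 u ∧ desc q2 q3 s v = u + s := by
  intro v
  induction v using Nat.strong_induction_on with
  | _ v ih =>
    rw [desc]
    split_ifs with h
    · obtain ⟨hs', u, hu, hv⟩ := h
      exact ih (v - s) (by omega)
    · intro hx
      exact h ⟨hs, hx⟩

lemma desc_mem (q2 q3 s : ℕ) : ∀ v : ℕ, Mrep q2 q3 v → Mrep q2 q3 (desc q2 q3 s v) := by
  intro v
  induction v using Nat.strong_induction_on with
  | _ v ih =>
    intro hv
    rw [desc]
    split_ifs with h
    · obtain ⟨hs, u, hu, hveq⟩ := h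
      have hvu : v - s = u := by omega
      exact ih (v - s) (by omega) (by rw [hvu]; exact hu)
    · exact hv

lemma mcnugget (p q n : ℕ) (hq : 0 < q) (hco : Nat.Coprime p q)
    (hn : (p - 1) * (q - 1) ≤ n) : ∃ y z : ℕ, n = y * p + z * q := by
  haveI : NeZero q := ⟨by omega⟩
  obtain ⟨y, hylt, hdvd⟩ : ∃ y : ℕ, y < q ∧ (q : ℤ) ∣ (n : ℤ) - y * p := by
    refine ⟨((n : ZMod q) * ((ZMod.unitOfCoprime p hco)⁻¹ : (ZMod q)ˣ)).val,
      ZMod.val_lt _, ?_⟩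
    have hkey : ((((n : ZMod q) * ((ZMod.unitOfCoprime p hco)⁻¹ : (ZMod q)ˣ)).val : ZMod q))
        * (p : ZMod q) = (n : ZMod q) := by
      rw [ZMod.natCast_val, ZMod.cast_id, ← ZMod.coe_unitOfCoprime p hco]
      exact Units.inv_mul_cancel_right _ _
    have h0 : (((n : ℤ) - ((((n : ZMod q) * ((ZMod.unitOfCoprime p hco)⁻¹ : (ZMod q)ˣ)).val : ℕ) : ℤ) * (p : ℤ) : ℤ) : ZMod q) = 0 := by
      push_cast
      rw [hkey, sub_self]
    exact (ZMod.intCast_zmod_eq_zero_iff_dvd _ _).mp h0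
  obtain ⟨e, he⟩ := hdvd
  have hq1' : (1 : ℤ) ≤ q := by exact_mod_cast hq
  have hyb : (y : ℤ) ≤ (q : ℤ) - 1 := by
    have : (y : ℤ) < q := by exact_mod_cast hylt
    omega
  have hnb : ((p : ℤ) - 1) * ((q : ℤ) - 1) ≤ n := by
    rcases Nat.eq_zero_or_pos p with hp | hp
    · subst hp
      have hn0 : (0 : ℤ) ≤ n := by positivity
      push_cast
      nlinarith [hq1', hn0]
    · zify [hp, hq] at hn
      exact hn
  have hmul : (y : ℤ) * p ≤ ((q : ℤ) - 1) * p := by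
    apply mul_le_mul_of_nonneg_right hyb (by positivity)
  have hring : ((p : ℤ) - 1) * ((q : ℤ) - 1) = ((q : ℤ) - 1) * p - (q : ℤ) + 1 := by ring
  have hbound : -(q : ℤ) < (n : ℤ) - y * p := by linarith
  have he0 : 0 ≤ e := by
    by_contra hneg
    push_neg at hneg
    have h4 : (q : ℤ) * e ≤ (q : ℤ) * (-1) := by
      apply mul_le_mul_of_nonneg_left (by omega) (by positivity)
    rw [he] at hbound
    linarith
  lift e to ℕ using he0 with f
  refine ⟨y, f, ?_⟩
  have hfin : (n : ℤ) = (y : ℤ) * p + (f : ℤ) * q := by linarith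
  exact_mod_cast hfin

lemma gauss (D : ℕ) : ∀ m : ℕ, 2 * ∑ k ∈ Finset.Icc 1 m, k * D = m * (m + 1) * D := by
  intro m
  induction m with
  | zero => simp
  | succ n ih =>
    rw [Finset.sum_Icc_succ_top (by omega : 1 ≤ n + 1)]
    calc 2 * (∑ k ∈ Finset.Icc 1 n, k * D + (n + 1) * D)
        = 2 * ∑ k ∈ Finset.Icc 1 n, k * D + 2 * ((n + 1) * D) := by ring
      _ = n * (n + 1) * D + 2 * ((n + 1) * D) := by rw [ih]
      _ = (n + 1) * (n + 1 + 1) * D := by ring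

theorem stmt_10 (a1 a2 a3 a4 D E q1 q2 q3 q4 : ℕ)
(h1 : 0 < a1) (h12 : a1 < a2) (h23 : a2 < a3) (h34 : a3 < a4)
    (hgcd : Nat.gcd (Nat.gcd a1 a2) (Nat.gcd a3 a4) = 1)
    (hd12 : ¬ a1 ∣ a2) (hd13 : ¬ a1 ∣ a3) (hd14 : ¬ a1 ∣ a4)
    (hd23 : ¬ a2 ∣ a3) (hd24 : ¬ a2 ∣ a4) (hd34 : ¬ a3 ∣ a4)
    (hsum : a1 + a4 = a2 + a3)
(hD : D = Nat.gcd a1 a4) (hE : E = Nat.gcd a2 a3)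
    (hq1 : a1 = q1 * D) (hq2 : a2 = q2 * E) (hq3 : a3 = q3 * E) (hq4 : a4 = q4 * D)
    (hu : a1 + a4 = Nat.gcd a1 a4 * Nat.gcd a2 a3) :
    2 * (SG a1 a2 a3 a4 \ TG a1 a2 a3).ncard ≥ (q1 - 1) * q1 * D := by
  classical
  have ha2 : 0 < a2 := lt_trans h1 h12
  have ha3 : 0 < a3 := lt_trans ha2 h23
  have ha4 : 0 < a4 := lt_trans ha3 h34
  have hmulpos : ∀ x y : ℕ, 0 < x * y → x ≠ 0 ∧ y ≠ 0 := by
    intro x y h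
    constructor <;> rintro rfl <;> simp at h
  obtain ⟨hq1ne, hDne⟩ := hmulpos q1 D (hq1 ▸ h1)
  obtain ⟨hq2ne, hEne⟩ := hmulpos q2 E (hq2 ▸ ha2)
  obtain ⟨hq3ne, -⟩ := hmulpos q3 E (hq3 ▸ ha3)
  obtain ⟨hq4ne, -⟩ := hmulpos q4 D (hq4 ▸ ha4)
  have hD0 : 0 < D := Nat.pos_of_ne_zero hDne
  have hE0 : 0 < E := Nat.pos_of_ne_zero hEne
  have hq2pos : 0 < q2 := Nat.pos_of_ne_zero hq2ne
  have hq3pos : 0 < q3 := Nat.pos_of_ne_zero hq3ne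
  have hq4pos : 0 < q4 := Nat.pos_of_ne_zero hq4ne
  have hu' : a1 + a4 = D * E := by rw [hD, hE]; exact hu
  have hE_eq : E = q1 + q4 := by
    have h' : (q1 + q4) * D = D * E := by
      calc (q1 + q4) * D = a1 + a4 := by rw [hq1, hq4]; ring
        _ = D * E := hu'
    have h'' : D * (q1 + q4) = D * E := by rw [← h']; ring
    exact (Nat.eq_of_mul_eq_mul_left hD0 h'').symm
  have hD_eq : D = q2 + q3 := by
    have h' : (q2 + q3) * E = E * D := by
      calc (q2 + q3) * E = a2 + a3 := by rw [hq2, hq3]; ring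
        _ = a1 + a4 := hsum.symm
        _ = D * E := hu'
        _ = E * D := by ring
    have h'' : E * (q2 + q3) = E * D := by rw [← h']; ring
    exact (Nat.eq_of_mul_eq_mul_left hE0 h'').symm
  have hq14 : Nat.Coprime q1 q4 := by
    have h' : Nat.gcd q1 q4 * D = D := by
      rw [← Nat.gcd_mul_right, ← hq1, ← hq4]
      exact hD.symm
    have h'' : Nat.gcd q1 q4 * D = 1 * D := by rw [one_mul]; exact h'
    exact Nat.eq_of_mul_eq_mul_right hD0 h''
  have hq23 : Nat.Coprime q2 q3 := by
    have h' : Nat.gcd q2 q3 * E = E := by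
      rw [← Nat.gcd_mul_right, ← hq2, ← hq3]
      exact hE.symm
    have h'' : Nat.gcd q2 q3 * E = 1 * E := by rw [one_mul]; exact h'
    exact Nat.eq_of_mul_eq_mul_right hE0 h''
  have hDE : Nat.Coprime D E := by
    have hdv : Nat.gcd D E ∣ 1 := by
      rw [← hgcd]
      apply Nat.dvd_gcd
      · apply Nat.dvd_gcd
        · exact dvd_trans (Nat.gcd_dvd_left D E) ⟨q1, by rw [hq1]; ring⟩
        · exact dvd_trans (Nat.gcd_dvd_right D E) ⟨q2, by rw [hq2]; ring⟩
      · apply Nat.dvd_gcd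
        · exact dvd_trans (Nat.gcd_dvd_right D E) ⟨q3, by rw [hq3]; ring⟩
        · exact dvd_trans (Nat.gcd_dvd_left D E) ⟨q4, by rw [hq4]; ring⟩
    exact Nat.dvd_one.mp hdv
  have hq1E : Nat.Coprime q1 E := by
    rw [hE_eq, Nat.add_comm]
    show Nat.gcd q1 (q4 + q1) = 1
    rw [Nat.gcd_add_self_right]
    exact hq14
  have hq4E : Nat.Coprime q4 E := by
    rw [hE_eq]
    show Nat.gcd q4 (q1 + q4) = 1
    rw [Nat.gcd_add_self_right]
    exact hq14.symm
  have ha1E : Nat.Coprime a1 E := by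
    rw [hq1]
    exact Nat.Coprime.mul hq1E hDE
  rcases Nat.lt_or_ge q1 2 with hq1lt | hq1ge
  · have h0 : q1 - 1 = 0 := by omega
    rw [h0]
    simp
  have hEq1 : q1 < E := by omega
  set C := (q2 - 1) * (q3 - 1) with hCdef
  -- key lemma A : membership in SG
  have keyA : ∀ k v : ℕ, 1 ≤ k → k ≤ q1 - 1 → Mrep q2 q3 v →
      ((q1 - k : ℕ) : ℤ) * (a4 : ℤ) + ((desc q2 q3 (k * D) v : ℕ) : ℤ) * (E : ℤ)
        ∈ SG a1 a2 a3 a4 := by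
    intro k v hk1 hk2 hv
    obtain ⟨y, z, hyz⟩ := desc_mem q2 q3 (k * D) v hv
    simp only [SG, Set.mem_setOf_eq]
    refine ⟨0, y, z, q1 - k, ?_⟩
    rw [hyz, hq2, hq3]
    push_cast
    ring
  -- key lemma B : not in TG
  have keyB : ∀ k v : ℕ, 1 ≤ k → k ≤ q1 - 1 →
      ((q1 - k : ℕ) : ℤ) * (a4 : ℤ) + ((desc q2 q3 (k * D) v : ℕ) : ℤ) * (E : ℤ)
        ∉ TG a1 a2 a3 := by
    intro k v hk1 hk2 hmem
    simp only [TG, Set.mem_setOf_eq] at hmem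
    obtain ⟨t1, t2, t3, heq⟩ := hmem
    set w := q1 - k with hw
    set x := desc q2 q3 (k * D) v with hx
    have hwk : w + k = q1 := by omega
    have hw1 : 1 ≤ w := by omega
    have ha1z : (a1 : ℤ) = (q1 : ℤ) * D := by exact_mod_cast hq1
    have ha2z : (a2 : ℤ) = (q2 : ℤ) * E := by exact_mod_cast hq2
    have ha3z : (a3 : ℤ) = (q3 : ℤ) * E := by exact_mod_cast hq3
    have ha4z : (a4 : ℤ) = (q4 : ℤ) * D := by exact_mod_cast hq4
    rw [ha1z, ha2z, ha3z, ha4z] at heq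
    have hdvd1 : (E : ℤ) ∣ ((w : ℤ) * q4 - t1 * q1) * D :=
      ⟨(t2 : ℤ) * q2 + t3 * q3 - x, by linear_combination heq⟩
    have hcopED : IsCoprime (E : ℤ) (D : ℤ) := Nat.isCoprime_iff_coprime.mpr hDE.symm
    have hdvd2 : (E : ℤ) ∣ (w : ℤ) * q4 - t1 * q1 := hcopED.dvd_of_dvd_mul_right hdvd1
    have hEz : (E : ℤ) = q1 + q4 := by exact_mod_cast hE_eq
    have hdvd3 : (E : ℤ) ∣ ((w : ℤ) + t1) * q1 := by
      have h5 : (E : ℤ) ∣ (w : ℤ) * E := dvd_mul_left _ _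
      have h6 : ((w : ℤ) + t1) * q1 = (w : ℤ) * E - ((w : ℤ) * q4 - t1 * q1) := by
        rw [hEz]; ring
      rw [h6]
      exact dvd_sub h5 hdvd2
    have hcopEq1 : IsCoprime (E : ℤ) (q1 : ℤ) := Nat.isCoprime_iff_coprime.mpr hq1E.symm
    have hdvd4 : (E : ℤ) ∣ (w : ℤ) + t1 := hcopEq1.dvd_of_dvd_mul_right hdvd3
    have hdvd5 : E ∣ w + t1 := by
      have h7 : (E : ℤ) ∣ ((w + t1 : ℕ) : ℤ) := by push_cast; exact hdvd4
      exact_mod_cast h7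
    obtain ⟨m, hm⟩ := hdvd5
    have hm1 : 1 ≤ m := by
      rcases Nat.eq_zero_or_pos m with h0 | hpos
      · rw [h0, Nat.mul_zero] at hm; omega
      · exact hpos
    have hmz : (w : ℤ) + t1 = (E : ℤ) * m := by exact_mod_cast hm
    have hwkz : (w : ℤ) + k = q1 := by exact_mod_cast hwk
    have hEne' : (E : ℤ) ≠ 0 := by exact_mod_cast hEne
    have hxeq : (x : ℤ) = ((t2 * q2 + t3 * q3 + (m - 1) * q1 * D + k * D : ℕ) : ℤ) := by
      have hc : ((m - 1 : ℕ) : ℤ) = (m : ℤ) - 1 := by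
        have h8 : (1 : ℕ) ≤ m := hm1
        push_cast [h8]
        ring
      apply mul_right_cancel₀ hEne'
      push_cast [hc]
      linear_combination heq + (q1 : ℤ) * (D : ℤ) * hmz + (w : ℤ) * (D : ℤ) * hEz
        - (D : ℤ) * (E : ℤ) * hwkz
    have hxeqn : x = t2 * q2 + t3 * q3 + (m - 1) * q1 * D + k * D := by exact_mod_cast hxeq
    have hKpos : 0 < k * D := Nat.mul_pos (by omega) hD0
    apply desc_not q2 q3 (k * D) hKpos v
    refine ⟨t2 * q2 + t3 * q3 + (m - 1) * q1 * D, ⟨t2 + (m - 1) * q1, t3 + (m - 1) * q1, ?_⟩, ?_⟩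
    · rw [hD_eq]; ring
    · exact hxeqn
  -- injectivity within a fixed k
  have keyInj : ∀ k : ℕ, 1 ≤ k →
      Set.InjOn (fun v : ℕ => ((q1 - k : ℕ) : ℤ) * (a4 : ℤ) + ((desc q2 q3 (k * D) v : ℕ) : ℤ) * (E : ℤ))
        ↑(Finset.Ico C (C + k * D)) := by
    intro k hk
    have hKpos : 0 < k * D := Nat.mul_pos hk hD0
    have haux : ∀ v v' : ℕ, C ≤ v → v < C + k * D → C ≤ v' → v' < C + k * D → v ≤ v' →
        desc q2 q3 (k * D) v = desc q2 q3 (k * D) v' → v = v' := by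
      intro v v' hv1 hv2 hv1' hv2' hle hdeq
      obtain ⟨j, hj⟩ := desc_add q2 q3 (k * D) v
      obtain ⟨j', hj'⟩ := desc_add q2 q3 (k * D) v'
      rw [hdeq] at hj
      rcases Nat.lt_or_ge j j' with hjj | hjj
      · exfalso
        have h1 : (j + 1) * (k * D) ≤ j' * (k * D) := Nat.mul_le_mul_right _ hjj
        have h2 : v + k * D ≤ v' := by
          calc v + k * D = desc q2 q3 (k * D) v' + (j * (k * D) + k * D) := by
                rw [hj]; ring
            _ = desc q2 q3 (k * D) v' + (j + 1) * (k * D) := by ring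
            _ ≤ desc q2 q3 (k * D) v' + j' * (k * D) := Nat.add_le_add_left h1 _
            _ = v' := hj'.symm
        omega
      · have h1 : j' * (k * D) ≤ j * (k * D) := Nat.mul_le_mul_right _ hjj
        have h2 : v' ≤ v := by
          calc v' = desc q2 q3 (k * D) v' + j' * (k * D) := hj'
            _ ≤ desc q2 q3 (k * D) v' + j * (k * D) := Nat.add_le_add_left h1 _
            _ = v := hj.symm
        omega
    intro v hv v' hv' heq2
    simp only [Finset.coe_Ico, Set.mem_Ico] at hv hv'
    have hde : desc q2 q3 (k * D) v = desc q2 q3 (k * D) v' := by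
      have h3 := add_left_cancel heq2
      have hEne' : (E : ℤ) ≠ 0 := by exact_mod_cast hEne
      have h4 := mul_right_cancel₀ hEne' h3
      exact_mod_cast h4
    rcases le_total v v' with h | h
    · exact haux v v' hv.1 hv.2 hv'.1 hv'.2 h hde
    · exact (haux v' v hv'.1 hv'.2 hv.1 hv.2 h hde.symm).symm
  -- the finset
  set Gk : ℕ → Finset ℤ := fun k =>
    (Finset.Ico C (C + k * D)).image
      (fun v : ℕ => ((q1 - k : ℕ) : ℤ) * (a4 : ℤ) + ((desc q2 q3 (k * D) v : ℕ) : ℤ) * (E : ℤ))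
    with hGk
  set F : Finset ℤ := (Finset.Icc 1 (q1 - 1)).biUnion Gk with hF
  have hGkcard : ∀ k : ℕ, 1 ≤ k → (Gk k).card = k * D := by
    intro k hk
    rw [hGk]
    rw [Finset.card_image_of_injOn (keyInj k hk), Nat.card_Ico]
    omega
  have hdisj : ∀ k ∈ Finset.Icc 1 (q1 - 1), ∀ k' ∈ Finset.Icc 1 (q1 - 1), k ≠ k' →
      Disjoint (Gk k) (Gk k') := by
    intro k hk k' hk' hne
    rw [Finset.disjoint_left]
    intro n hn hn'
    rw [hGk] at hn hn'
    simp only [Finset.mem_image, Finset.mem_Ico] at hn hn'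
    obtain ⟨v, hv, hgv⟩ := hn
    obtain ⟨v', hv', hgv'⟩ := hn'
    simp only [Finset.mem_Icc] at hk hk'
    have heq2 : ((q1 - k : ℕ) : ℤ) * (a4 : ℤ) + ((desc q2 q3 (k * D) v : ℕ) : ℤ) * (E : ℤ)
        = ((q1 - k' : ℕ) : ℤ) * (a4 : ℤ) + ((desc q2 q3 (k' * D) v' : ℕ) : ℤ) * (E : ℤ) := by
      rw [hgv, hgv']
    have ha4z : (a4 : ℤ) = (q4 : ℤ) * D := by exact_mod_cast hq4
    have hdvdE : (E : ℤ) ∣ (((q1 - k : ℕ) : ℤ) - ((q1 - k' : ℕ) : ℤ)) * ((q4 : ℤ) * D) :=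
      ⟨((desc q2 q3 (k' * D) v' : ℕ) : ℤ) - ((desc q2 q3 (k * D) v : ℕ) : ℤ), by
        rw [← ha4z]; linear_combination heq2⟩
    have hcop : IsCoprime (E : ℤ) ((q4 : ℤ) * D) :=
      IsCoprime.mul_right (Nat.isCoprime_iff_coprime.mpr hq4E.symm)
        (Nat.isCoprime_iff_coprime.mpr hDE.symm)
    have hdvd6 : (E : ℤ) ∣ ((q1 - k : ℕ) : ℤ) - ((q1 - k' : ℕ) : ℤ) :=
      hcop.dvd_of_dvd_mul_right hdvdE
    obtain ⟨c, hc⟩ := hdvd6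
    have hlt1 : ((q1 - k : ℕ) : ℤ) - ((q1 - k' : ℕ) : ℤ) < E := by omega
    have hlt2 : -(E : ℤ) < ((q1 - k : ℕ) : ℤ) - ((q1 - k' : ℕ) : ℤ) := by omega
    have hne0 : ((q1 - k : ℕ) : ℤ) - ((q1 - k' : ℕ) : ℤ) ≠ 0 := by omega
    have hEpos : (0 : ℤ) < E := by exact_mod_cast hE0
    rcases lt_trichotomy c 0 with hcneg | hc0 | hcpos
    · have h5 : (E : ℤ) * c ≤ (E : ℤ) * (-1) := by
        apply mul_le_mul_of_nonneg_left (by omega) (le_of_lt hEpos)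
      rw [hc] at hlt2
      linarith
    · rw [hc0, mul_zero] at hc
      exact hne0 hc
    · have h5 : (E : ℤ) * 1 ≤ (E : ℤ) * c := by
        apply mul_le_mul_of_nonneg_left (by omega) (le_of_lt hEpos)
      rw [hc] at hlt1
      linarith
  have hFcard : F.card = ∑ k ∈ Finset.Icc 1 (q1 - 1), k * D := by
    rw [hF, Finset.card_biUnion hdisj]
    apply Finset.sum_congr rfl
    intro k hk
    exact hGkcard k (Finset.mem_Icc.mp hk).1
  have hFsub : ↑F ⊆ SG a1 a2 a3 a4 \ TG a1 a2 a3 := by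
    intro n hn
    rw [hF] at hn
    simp only [Finset.coe_biUnion, Set.mem_iUnion, Finset.mem_coe, Finset.mem_Icc] at hn
    obtain ⟨k, ⟨hk1, hk2⟩, hnk⟩ := hn
    rw [hGk] at hnk
    simp only [Finset.mem_image, Finset.mem_Ico] at hnk
    obtain ⟨v, ⟨hv1, hv2⟩, rfl⟩ := hnk
    constructor
    · exact keyA k v hk1 hk2 (mcnugget q2 q3 v hq3pos hq23 hv1)
    · exact keyB k v hk1 hk2
  -- finiteness of SG \ TG
  have hfin : (SG a1 a2 a3 a4 \ TG a1 a2 a3).Finite := by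
    apply Set.Finite.subset (Set.finite_Icc (0 : ℤ) ((a1 * E + q2 * q3 * E : ℕ) : ℤ))
    rintro n ⟨hnS, hnT⟩
    simp only [SG, Set.mem_setOf_eq] at hnS
    obtain ⟨s1, s2, s3, s4, hrep⟩ := hnS
    set N : ℕ := s1 * a1 + s2 * a2 + s3 * a3 + s4 * a4 with hN
    have hnN : n = (N : ℤ) := by rw [hrep, hN]; push_cast; ring
    simp only [Set.mem_Icc]
    constructor
    · rw [hnN]; positivity
    · by_contra hgt
      push_neg at hgt
      apply hnT
      rw [hnN] at hgt
      have hNB : a1 * E + q2 * q3 * E ≤ N := by exact_mod_cast hgt.le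
      haveI : NeZero E := ⟨hEne⟩
      set y1 := ((N : ZMod E) * ((ZMod.unitOfCoprime a1 ha1E)⁻¹ : (ZMod E)ˣ)).val with hy1
      have hy1lt : y1 < E := ZMod.val_lt _
      have hkey : ((y1 : ZMod E)) * (a1 : ZMod E) = (N : ZMod E) := by
        rw [hy1, ZMod.natCast_val, ZMod.cast_id, ← ZMod.coe_unitOfCoprime a1 ha1E]
        exact Units.inv_mul_cancel_right _ _
      have hdvd : (E : ℤ) ∣ (N : ℤ) - y1 * a1 := by
        have h0 : (((N : ℤ) - (y1 : ℤ) * (a1 : ℤ) : ℤ) : ZMod E) = 0 := by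
          push_cast
          rw [hkey, sub_self]
        exact (ZMod.intCast_zmod_eq_zero_iff_dvd _ _).mp h0
      obtain ⟨e, he⟩ := hdvd
      have h1 : y1 * a1 ≤ (E - 1) * a1 := Nat.mul_le_mul_right _ (by omega)
      have h2 : (E - 1) * a1 + a1 = E * a1 := by
        have hE' : (E - 1) + 1 = E := by omega
        calc (E - 1) * a1 + a1 = ((E - 1) + 1) * a1 := by ring
          _ = E * a1 := by rw [hE']
      have h3 : y1 * a1 + a1 ≤ a1 * E := by
        calc y1 * a1 + a1 ≤ (E - 1) * a1 + a1 := Nat.add_le_add_right h1 _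
          _ = E * a1 := h2
          _ = a1 * E := Nat.mul_comm _ _
      have he0 : 0 ≤ e := by
        by_contra hneg
        push_neg at hneg
        have h4 : (E : ℤ) * e ≤ (E : ℤ) * (-1) := by
          apply mul_le_mul_of_nonneg_left (by omega) (by positivity)
        have h6 : y1 * a1 ≤ N := by omega
        have h7 : (y1 : ℤ) * a1 ≤ N := by exact_mod_cast h6
        have h8 : (1 : ℤ) ≤ E := by exact_mod_cast hE0
        linarith
      lift e to ℕ using he0 with f
      have hNeq : N = y1 * a1 + E * f := by
        have h9 : (N : ℤ) = (y1 : ℤ) * a1 + (E : ℤ) * f := by linarith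
        exact_mod_cast h9
      have hfge : (q2 - 1) * (q3 - 1) ≤ f := by
        have h10 : q2 * q3 * E ≤ E * f := by omega
        have h11 : E * (q2 * q3) ≤ E * f := by
          calc E * (q2 * q3) = q2 * q3 * E := by ring
            _ ≤ E * f := h10
        have h12 : q2 * q3 ≤ f := Nat.le_of_mul_le_mul_left h11 hE0
        have h13 : (q2 - 1) * (q3 - 1) ≤ q2 * q3 := Nat.mul_le_mul (by omega) (by omega)
        omega
      obtain ⟨y, z, hyz⟩ := mcnugget q2 q3 f hq3pos hq23 hfge
      simp only [TG, Set.mem_setOf_eq]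
      exact ⟨y1, y, z, by rw [hnN, hNeq, hyz, hq2, hq3]; push_cast; ring⟩
  -- conclude
  have hccard : F.card ≤ (SG a1 a2 a3 a4 \ TG a1 a2 a3).ncard := by
    rw [← Set.ncard_coe_finset]
    exact Set.ncard_le_ncard hFsub hfin
  have hfinal : (q1 - 1) * q1 * D = 2 * F.card := by
    rw [hFcard, gauss D (q1 - 1)]
    have h14 : q1 - 1 + 1 = q1 := by omega
    rw [h14]
  exact le_trans (le_of_eq hfinal) (Nat.mul_le_mul_left 2 hccard)
end

section
/- Let S be a unitary numerical semigroup generated by {a1,a2,a3,a4} with a1=q1D, and let T = ⟨a1,a2,a3⟩. Then S is symmetric and g(S) = g(T) − (q1−1)·a1 = q3·a2 + (q1−1)·a4 − a1. -/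
/-- Two-generator semigroup over ℤ. -/
def Sem2 (p q : ℤ) : Set ℤ := {s | ∃ a b : ℕ, s = a * p + b * q}

def GlueSet (D E : ℤ) (S1 S2 : Set ℤ) : Set ℤ :=
  {n | ∃ x ∈ S1, ∃ y ∈ S2, n = D * x + E * y}

lemma sem2_zero (p q : ℤ) : (0:ℤ) ∈ Sem2 p q := ⟨0, 0, by simp⟩

lemma sem2_add (p q : ℤ) : ∀ x ∈ Sem2 p q, ∀ y ∈ Sem2 p q, x + y ∈ Sem2 p q := by
  rintro x ⟨a, b, rfl⟩ y ⟨c, d, rfl⟩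
  exact ⟨a + c, b + d, by push_cast; ring⟩

lemma sem2_nonneg {p q : ℤ} (hp : 0 ≤ p) (hq : 0 ≤ q) : ∀ x ∈ Sem2 p q, 0 ≤ x := by
  rintro x ⟨a, b, rfl⟩
  exact add_nonneg (mul_nonneg (Int.natCast_nonneg a) hp)
    (mul_nonneg (Int.natCast_nonneg b) hq)

lemma mem_nsmul {S : Set ℤ} (hadd : ∀ x ∈ S, ∀ y ∈ S, x + y ∈ S) (h0 : (0:ℤ) ∈ S)
    {x : ℤ} (hx : x ∈ S) : ∀ k : ℕ, (k : ℤ) * x ∈ S := by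
  intro k
  induction k with
  | zero => simpa using h0
  | succ n ih =>
      have h := hadd _ ih _ hx
      have : ((n : ℤ) + 1) * x = (n : ℤ) * x + x := by ring
      rw [Nat.cast_succ, this]
      exact h

lemma exists_nat_dvd {c D : ℤ} (hD : 0 < D) (h : IsCoprime c D) (n : ℤ) :
    ∃ m : ℕ, D ∣ n - c * m := by
  obtain ⟨u, v, huv⟩ := h
  refine ⟨((u * n) % D).toNat, ?_⟩
  have h0 : 0 ≤ (u * n) % D := Int.emod_nonneg _ hD.ne'
  rw [Int.toNat_of_nonneg h0, Int.emod_def]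
  exact ⟨n * v + c * ((u * n) / D), by linear_combination (-n) * huv⟩

lemma sem2_rep {p q : ℤ} (hp : 0 < p) (hpq : IsCoprime p q) (n : ℤ) :
    ∃ (b : ℕ) (c : ℤ), (b : ℤ) < p ∧ n - b * q = p * c := by
  obtain ⟨m, c1, hc1⟩ := exists_nat_dvd hp hpq.symm n
  -- hc1 : n - q * m = p * c1
  refine ⟨((m : ℤ) % p).toNat, c1 + ((m : ℤ) / p) * q, ?_, ?_⟩
  · rw [Int.toNat_of_nonneg (Int.emod_nonneg _ hp.ne')]
    exact Int.emod_lt_of_pos _ hp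
  · rw [Int.toNat_of_nonneg (Int.emod_nonneg _ hp.ne'), Int.emod_def]
    linear_combination hc1

lemma sem2_mem_iff {p q : ℤ} (hp : 0 < p) (hq : 0 ≤ q) (hpq : IsCoprime p q)
    {n c : ℤ} {b : ℕ} (hb : (b : ℤ) < p) (hc : n - b * q = p * c) :
    n ∈ Sem2 p q ↔ 0 ≤ c := by
  constructor
  · rintro ⟨a', b', h⟩
    have h1 : ((b' : ℤ) - b) * q = p * (c - a') := by linear_combination hc - h
    have h2 : p ∣ ((b' : ℤ) - b) := hpq.dvd_of_dvd_mul_right ⟨c - a', h1⟩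
    obtain ⟨k, hk⟩ := h2
    have hb'0 : (0 : ℤ) ≤ b' := Int.natCast_nonneg b'
    have hk0 : 0 ≤ k := by nlinarith
    have h3 : p * c = p * ((a' : ℤ) + k * q) := by linear_combination h - hc + q * hk
    have h4 : c = (a' : ℤ) + k * q := mul_left_cancel₀ hp.ne' h3
    rw [h4]
    exact add_nonneg (Int.natCast_nonneg a') (mul_nonneg hk0 hq)
  · intro h0
    refine ⟨c.toNat, b, ?_⟩
    rw [Int.toNat_of_nonneg h0]
    linear_combination hc

lemma sem2_sym {p q : ℤ} (hp : 0 < p) (hq : 0 < q) (hpq : IsCoprime p q) :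
    ∀ n, n ∈ Sem2 p q ↔ (p * q - p - q) - n ∉ Sem2 p q := by
  intro n
  obtain ⟨b, c, hb, hc⟩ := sem2_rep hp hpq n
  have h1 := sem2_mem_iff hp hq.le hpq hb hc
  have hb0 : 0 ≤ (b : ℤ) := Int.natCast_nonneg b
  have hb'cast : (((p - 1 - (b : ℤ)).toNat : ℤ)) = p - 1 - b :=
    Int.toNat_of_nonneg (by omega)
  have hb'lt : (((p - 1 - (b : ℤ)).toNat : ℤ)) < p := by omega
  have hc' : (p * q - p - q - n) - ((p - 1 - (b : ℤ)).toNat : ℤ) * q = p * (-1 - c) := by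
    rw [hb'cast]; linear_combination (-1 : ℤ) * hc
  have h2 := sem2_mem_iff hp hq.le hpq hb'lt hc'
  rw [h1, h2]
  omega

lemma glue_sym {D E : ℤ} {S1 S2 : Set ℤ} {F1 F2 : ℤ}
    (hD : 0 < D) (hE : 0 < E) (hDE : IsCoprime D E)
    (h1add : ∀ x ∈ S1, ∀ y ∈ S1, x + y ∈ S1)
    (h2add : ∀ x ∈ S2, ∀ y ∈ S2, x + y ∈ S2)
    (h10 : (0:ℤ) ∈ S1) (h20 : (0:ℤ) ∈ S2)
    (h2nn : ∀ y ∈ S2, 0 ≤ y)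
    (hES1 : E ∈ S1) (hDS2 : D ∈ S2)
    (hres : ∃ r : ℤ, r ∈ S2 ∧ IsCoprime r D)
    (hsym1 : ∀ n, n ∈ S1 ↔ F1 - n ∉ S1)
    (hsym2 : ∀ n, n ∈ S2 ↔ F2 - n ∉ S2) :
    ∀ n, n ∈ GlueSet D E S1 S2 ↔
      (D * F1 + E * F2 + D * E) - n ∉ GlueSet D E S1 S2 := by
  have hF1 : F1 ∉ S1 := fun h => (hsym1 F1).mp h (by simpa using h10)
  have hF2 : F2 ∉ S2 := fun h => (hsym2 F2).mp h (by simpa using h20)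
  -- both in is impossible
  have both : ∀ n, n ∈ GlueSet D E S1 S2 →
      (D * F1 + E * F2 + D * E) - n ∈ GlueSet D E S1 S2 → False := by
    rintro n ⟨x, hx, y, hy, hn⟩ ⟨x', hx', y', hy', hGn⟩
    have key : D * (x + x' - F1) = E * (F2 + D - y - y') := by
      linear_combination - hGn - hn
    have hdvd : D ∣ (F2 + D - y - y') :=
      hDE.dvd_of_dvd_mul_left ⟨x + x' - F1, key.symm⟩
    obtain ⟨k, hk⟩ := hdvd
    have hxk : x + x' - F1 = E * k := by
      have : D * (x + x' - F1) = D * (E * k) := by rw [key, hk]; ring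
      exact mul_left_cancel₀ hD.ne' this
    rcases le_or_gt 1 k with hk1 | hk1
    · -- F2 = (y + y') + (k-1) * D ∈ S2
      have hmem : ((k - 1).toNat : ℤ) * D ∈ S2 := mem_nsmul h2add h20 hDS2 _
      rw [Int.toNat_of_nonneg (by omega)] at hmem
      have h5 : F2 = (y + y') + (k - 1) * D := by linear_combination hk
      exact hF2 (h5 ▸ h2add _ (h2add _ hy _ hy') _ hmem)
    · -- k ≤ 0 : F1 = x + x' + (-k) * E ∈ S1
      have hmem : ((-k).toNat : ℤ) * E ∈ S1 := mem_nsmul h1add h10 hES1 _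
      rw [Int.toNat_of_nonneg (by omega)] at hmem
      have h5 : F1 = (x + x') + (-k) * E := by linear_combination -hxk
      exact hF1 (h5 ▸ h1add _ (h1add _ hx _ hx') _ hmem)
  -- not in implies complement in
  have compl : ∀ n, n ∉ GlueSet D E S1 S2 →
      (D * F1 + E * F2 + D * E) - n ∈ GlueSet D E S1 S2 := by
    intro n hn
    obtain ⟨r, hr, hrD⟩ := hres
    obtain ⟨m0, hm0⟩ := exists_nat_dvd hD (((hDE.symm).mul_left hrD)) n
    -- hm0 : D ∣ n - (E * r) * m0
    have hPex : ∃ w : ℕ, (w : ℤ) ∈ S2 ∧ D ∣ n - E * w := by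
      refine ⟨(r * (m0 : ℤ)).toNat, ?_, ?_⟩
      · rw [Int.toNat_of_nonneg (mul_nonneg (h2nn _ hr) (Int.natCast_nonneg _))]
        have := mem_nsmul h2add h20 hr m0
        rwa [mul_comm] at this
      · rw [Int.toNat_of_nonneg (mul_nonneg (h2nn _ hr) (Int.natCast_nonneg _))]
        have : n - E * (r * (m0 : ℤ)) = n - E * r * m0 := by ring
        rw [this]; exact hm0
    classical
    let w := Nat.find hPex
    obtain ⟨hw2, hwd⟩ : (w : ℤ) ∈ S2 ∧ D ∣ n - E * w := Nat.find_spec hPex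
    obtain ⟨a', ha'⟩ := hwd
    have hna : a' ∉ S1 := by
      intro h
      exact hn ⟨a', h, w, hw2, by linarith⟩
    have hF1a : F1 - a' ∈ S1 := by
      by_contra h
      exact hna ((hsym1 a').mpr h)
    have hwD : (w : ℤ) - D ∉ S2 := by
      intro h
      have h0 : 0 ≤ (w : ℤ) - D := h2nn _ h
      have hlt : ((w : ℤ) - D).toNat < w := by omega
      refine Nat.find_min hPex hlt ⟨?_, ?_⟩
      · rwa [Int.toNat_of_nonneg h0]
      · rw [Int.toNat_of_nonneg h0]
        obtain ⟨t, ht⟩ := (⟨a', ha'⟩ : D ∣ n - E * w)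
        exact ⟨t + E, by linarith [ht]⟩
    have hw' : F2 + D - w ∈ S2 := by
      by_contra h
      refine hwD ((hsym2 _).mpr ?_)
      rw [show F2 - ((w : ℤ) - D) = F2 + D - w by ring]
      exact h
    exact ⟨F1 - a', hF1a, F2 + D - (w : ℤ), hw', by linarith [ha']⟩
  intro n
  constructor
  · intro h hc
    exact both n h hc
  · intro h
    by_contra hn
    exact h (compl n hn)

lemma sym_final {S : Set ℤ} {G : ℤ} (h0 : (0:ℤ) ∈ S) (hnn : ∀ s ∈ S, 0 ≤ s)
    (hsym : ∀ n, n ∈ S ↔ G - n ∉ S) :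
    IsGreatest {n : ℤ | n ∉ S} G ∧ Odd G ∧
      ({s ∈ S | s < G}.ncard : ℤ) * 2 = G + 1 := by
  have hGnot : G ∉ S := by
    intro h
    exact (hsym G).mp h (by simpa using h0)
  have hcompl : ∀ n, n ∉ S → G - n ∈ S := by
    intro n hn
    by_contra h
    exact hn ((hsym n).mpr h)
  have hGub : ∀ m ∈ {n : ℤ | n ∉ S}, m ≤ G := by
    intro m hm
    have := hnn _ (hcompl m hm)
    linarith
  have hG1 : G + 1 ∈ S := by
    have h1 : (-1 : ℤ) ∉ S := fun h => by have := hnn _ h; omega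
    have := hcompl _ h1
    simpa [sub_neg_eq_add] using this
  have hGge : -1 ≤ G := by linarith [hnn _ hG1]
  set A : Set ℤ := {s ∈ S | s < G} with hA
  set B : Set ℤ := {n | n ∉ S ∧ 0 ≤ n ∧ n ≤ G} with hB
  have hAsub : A ⊆ Set.Icc 0 G := fun s hs => ⟨hnn _ hs.1, hs.2.le⟩
  have hBsub : B ⊆ Set.Icc 0 G := fun s hs => ⟨hs.2.1, hs.2.2⟩
  have hAfin : A.Finite := (Set.finite_Icc 0 G).subset hAsub
  have hBfin : B.Finite := (Set.finite_Icc 0 G).subset hBsub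
  have hdisj : Disjoint A B := by
    rw [Set.disjoint_left]
    rintro s ⟨hs1, _⟩ ⟨hs2, _⟩
    exact hs2 hs1
  have hunion : A ∪ B = Set.Icc 0 G := by
    ext n
    constructor
    · rintro (h | h)
      · exact hAsub h
      · exact hBsub h
    · rintro ⟨hn0, hnG⟩
      by_cases h : n ∈ S
      · left
        refine ⟨h, lt_of_le_of_ne hnG ?_⟩
        rintro rfl; exact hGnot h
      · right; exact ⟨h, hn0, hnG⟩
  have hBimg : B = (fun s => G - s) '' A := by
    ext n
    constructor
    · rintro ⟨hn, hn0, hnG⟩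
      refine ⟨G - n, ⟨hcompl n hn, ?_⟩, by ring⟩
      have hne : n ≠ 0 := fun h => hn (h ▸ h0)
      omega
    · rintro ⟨s, ⟨hs, hsG⟩, rfl⟩
      simp only [hB, Set.mem_setOf_eq]
      exact ⟨(hsym s).mp hs, by omega, by linarith [hnn _ hs]⟩
  have hcardAB : B.ncard = A.ncard := by
    rw [hBimg]
    exact Set.ncard_image_of_injective A (fun a b h => by omega)
  have hIcc : (Set.Icc (0:ℤ) G).ncard = (G + 1).toNat := by
    rw [← Finset.coe_Icc, Set.ncard_coe_finset, Int.card_Icc]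
    norm_num
  have hsum : A.ncard + B.ncard = (G + 1).toNat := by
    rw [← Set.ncard_union_eq hdisj hAfin hBfin, hunion, hIcc]
  have hval : (A.ncard : ℤ) * 2 = G + 1 := by
    have := hsum
    rw [hcardAB] at this
    have h2 : ((A.ncard : ℤ) + A.ncard) = (((G + 1).toNat : ℕ) : ℤ) := by
      exact_mod_cast this
    rw [Int.toNat_of_nonneg (by linarith)] at h2
    linarith
  refine ⟨⟨hGnot, hGub⟩, ⟨(A.ncard : ℤ) - 1, by linarith⟩, hval⟩

theorem stmt_11 (a1 a2 a3 a4 D E q1 q2 q3 q4 : ℕ)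
(h1 : 0 < a1) (h12 : a1 < a2) (h23 : a2 < a3) (h34 : a3 < a4)
    (hgcd : Nat.gcd (Nat.gcd a1 a2) (Nat.gcd a3 a4) = 1)
    (hd12 : ¬ a1 ∣ a2) (hd13 : ¬ a1 ∣ a3) (hd14 : ¬ a1 ∣ a4)
    (hd23 : ¬ a2 ∣ a3) (hd24 : ¬ a2 ∣ a4) (hd34 : ¬ a3 ∣ a4)
    (hsum : a1 + a4 = a2 + a3)
(hD : D = Nat.gcd a1 a4) (hE : E = Nat.gcd a2 a3)
    (hq1 : a1 = q1 * D) (hq2 : a2 = q2 * E) (hq3 : a3 = q3 * E) (hq4 : a4 = q4 * D)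
    (hu : a1 + a4 = Nat.gcd a1 a4 * Nat.gcd a2 a3)
    (gT : ℤ) (hgT : IsGreatest {n : ℤ | n ∉ TG a1 a2 a3} gT) :
    ∃ gS : ℤ, IsGreatest {n : ℤ | n ∉ SG a1 a2 a3 a4} gS ∧
      Odd gS ∧
      ({s ∈ SG a1 a2 a3 a4 | s < gS}.ncard : ℤ) * 2 = gS + 1 ∧
      gS = gT - (q1 - 1 : ℕ) * a1 ∧
      gS = q3 * a2 + ((q1 : ℤ) - 1) * a4 - a1 := by
  -- basic positivity
  have h2 : 0 < a2 := lt_trans h1 h12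
  have h3 : 0 < a3 := lt_trans h2 h23
  have h4 : 0 < a4 := lt_trans h3 h34
  have hDpos : 0 < D := by rw [hD]; exact Nat.gcd_pos_of_pos_left _ h1
  have hEpos : 0 < E := by rw [hE]; exact Nat.gcd_pos_of_pos_left _ h2
  -- basic positivity
  have h2 : 0 < a2 := lt_trans h1 h12
  have h3 : 0 < a3 := lt_trans h2 h23
  have h4 : 0 < a4 := lt_trans h3 h34
  have hDpos : 0 < D := by rw [hD]; exact Nat.gcd_pos_of_pos_left _ h1
  have hEpos : 0 < E := by rw [hE]; exact Nat.gcd_pos_of_pos_left _ h2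
  have hq1p : 0 < q1 := Nat.pos_of_ne_zero fun h => by simp [h] at hq1; omega
  have hq2p : 0 < q2 := Nat.pos_of_ne_zero fun h => by simp [h] at hq2; omega
  have hq3p : 0 < q3 := Nat.pos_of_ne_zero fun h => by simp [h] at hq3; omega
  have hq4p : 0 < q4 := Nat.pos_of_ne_zero fun h => by simp [h] at hq4; omega
  -- coprimality of q1 q4 and q2 q3
  have hgcd14 : Nat.gcd a1 a4 = Nat.gcd q1 q4 * D := by
    rw [hq1, hq4, Nat.gcd_mul_right]
  have hq14 : Nat.Coprime q1 q4 := by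
    refine Nat.eq_of_mul_eq_mul_right hDpos ?_
    rw [one_mul, ← hgcd14]; exact hD.symm
  have hgcd23 : Nat.gcd a2 a3 = Nat.gcd q2 q3 * E := by
    rw [hq2, hq3, Nat.gcd_mul_right]
  have hq23 : Nat.Coprime q2 q3 := by
    refine Nat.eq_of_mul_eq_mul_right hEpos ?_
    rw [one_mul, ← hgcd23]; exact hE.symm
  -- D and E coprime
  have hDa1 : D ∣ a1 := ⟨q1, by rw [hq1, Nat.mul_comm]⟩
  have hDa4 : D ∣ a4 := ⟨q4, by rw [hq4, Nat.mul_comm]⟩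
  have hEa2 : E ∣ a2 := ⟨q2, by rw [hq2, Nat.mul_comm]⟩
  have hEa3 : E ∣ a3 := ⟨q3, by rw [hq3, Nat.mul_comm]⟩
  have hDE : Nat.Coprime D E := by
    have h' : Nat.gcd D E ∣ 1 := by
      rw [← hgcd]
      exact Nat.dvd_gcd
        (Nat.dvd_gcd ((Nat.gcd_dvd_left D E).trans hDa1)
          ((Nat.gcd_dvd_right D E).trans hEa2))
        (Nat.dvd_gcd ((Nat.gcd_dvd_right D E).trans hEa3)
          ((Nat.gcd_dvd_left D E).trans hDa4))
    exact Nat.dvd_one.mp h'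
  -- additive relations
  have hDEprod : a1 + a4 = D * E := by rw [hu, ← hD, ← hE]
  have hE14 : q1 + q4 = E := by
    refine Nat.eq_of_mul_eq_mul_right hDpos ?_
    rw [add_mul, ← hq1, ← hq4, hDEprod, Nat.mul_comm]
  have hD23 : q2 + q3 = D := by
    refine Nat.eq_of_mul_eq_mul_right hEpos ?_
    have h' : a2 + a3 = D * E := by omega
    rw [add_mul, ← hq2, ← hq3, h']
  have hq2D : Nat.Coprime q2 D := by
    rw [← hD23]; exact Nat.coprime_self_add_right.mpr hq23
  have hEq1 : Nat.Coprime E q1 := by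
    rw [← hE14]; exact Nat.coprime_self_add_left.mpr (hq14.symm)
  have hEa1cop : Nat.Coprime E a1 := by
    rw [hq1]; exact Nat.Coprime.mul_right hEq1 hDE.symm
  -- casts
  have ca1 : (a1 : ℤ) = (q1 : ℤ) * D := by rw [hq1]; push_cast; ring
  have ca2 : (a2 : ℤ) = (q2 : ℤ) * E := by rw [hq2]; push_cast; ring
  have ca3 : (a3 : ℤ) = (q3 : ℤ) * E := by rw [hq3]; push_cast; ring
  have ca4 : (a4 : ℤ) = (q4 : ℤ) * D := by rw [hq4]; push_cast; ring
  have cD : (D : ℤ) = (q2 : ℤ) + q3 := by rw [← hD23]; push_cast; ring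
  have cE : (E : ℤ) = (q1 : ℤ) + q4 := by rw [← hE14]; push_cast; ring
  have cDpos : (0 : ℤ) < D := by exact_mod_cast hDpos
  have cEpos : (0 : ℤ) < E := by exact_mod_cast hEpos
  have ca1pos : (0 : ℤ) < a1 := by exact_mod_cast h1
  have cq1pos : (0 : ℤ) < q1 := by exact_mod_cast hq1p
  have cq2pos : (0 : ℤ) < q2 := by exact_mod_cast hq2p
  have cq3pos : (0 : ℤ) < q3 := by exact_mod_cast hq3p
  have cq4pos : (0 : ℤ) < q4 := by exact_mod_cast hq4p
  -- symmetry of two-generator pieces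
  have hs1 := sem2_sym cq1pos cq4pos hq14.isCoprime
  have hs2 := sem2_sym cq2pos cq3pos hq23.isCoprime
  have hs3 := sem2_sym (p := (1:ℤ)) (q := (1:ℤ)) one_pos one_pos (isCoprime_one_left)
  have hs3' : ∀ n : ℤ, n ∈ Sem2 1 1 ↔ (-1 : ℤ) - n ∉ Sem2 1 1 := fun n => by
    simpa only [show ((1:ℤ) * 1 - 1 - 1) = (-1 : ℤ) by norm_num] using hs3 n
  -- glue for S
  have hES1mem : (E : ℤ) ∈ Sem2 q1 q4 := ⟨1, 1, by rw [cE]; push_cast; ring⟩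
  have hDS2mem : (D : ℤ) ∈ Sem2 q2 q3 := ⟨1, 1, by rw [cD]; push_cast; ring⟩
  have hq2mem : (q2 : ℤ) ∈ Sem2 q2 q3 := ⟨1, 0, by push_cast; ring⟩
  have hsymS0 := glue_sym cDpos cEpos hDE.isCoprime (sem2_add _ _) (sem2_add _ _)
    (sem2_zero _ _) (sem2_zero _ _)
    (sem2_nonneg cq2pos.le cq3pos.le) hES1mem hDS2mem
    ⟨(q2 : ℤ), hq2mem, hq2D.isCoprime⟩ hs1 hs2
  have hSGeq : SG a1 a2 a3 a4 = GlueSet (D : ℤ) (E : ℤ) (Sem2 q1 q4) (Sem2 q2 q3) := by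
    ext n
    simp only [SG, GlueSet, Sem2, Set.mem_setOf_eq]
    constructor
    · rintro ⟨t1, t2, t3, t4, rfl⟩
      exact ⟨(t1 : ℤ) * q1 + (t4 : ℤ) * q4, ⟨t1, t4, by ring⟩,
        (t2 : ℤ) * q2 + (t3 : ℤ) * q3, ⟨t2, t3, by ring⟩,
        by rw [ca1, ca2, ca3, ca4]; ring⟩
    · rintro ⟨x, ⟨s1, s4, rfl⟩, y, ⟨s2, s3, rfl⟩, rfl⟩
      exact ⟨s1, s2, s3, s4, by rw [ca1, ca2, ca3, ca4]; ring⟩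
  have symS : ∀ n : ℤ, n ∈ SG a1 a2 a3 a4 ↔
      ((D:ℤ) * ((q1:ℤ) * q4 - q1 - q4) + (E:ℤ) * ((q2:ℤ) * q3 - q2 - q3) + (D:ℤ) * E) - n
        ∉ SG a1 a2 a3 a4 := fun n => by
    rw [hSGeq]; exact hsymS0 n
  -- glue for T
  have ha1S2mem : (a1 : ℤ) ∈ Sem2 q2 q3 := ⟨q1, q1, by rw [ca1, cD]; ring⟩
  have hEoneMem : (E : ℤ) ∈ Sem2 1 1 := ⟨E, 0, by push_cast; ring⟩
  have cEa1 : IsCoprime (E : ℤ) (a1 : ℤ) := hEa1cop.isCoprime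
  have hsymT0 := glue_sym cEpos ca1pos cEa1 (sem2_add _ _) (sem2_add _ _)
    (sem2_zero _ _) (sem2_zero _ _)
    (sem2_nonneg zero_le_one zero_le_one) ha1S2mem hEoneMem
    ⟨(1 : ℤ), ⟨1, 0, by norm_num⟩, isCoprime_one_left⟩ hs2 hs3'
  have hTGeq : TG a1 a2 a3 = GlueSet (E : ℤ) (a1 : ℤ) (Sem2 q2 q3) (Sem2 1 1) := by
    ext n
    simp only [TG, GlueSet, Sem2, Set.mem_setOf_eq]
    constructor
    · rintro ⟨t1, t2, t3, rfl⟩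
      exact ⟨(t2 : ℤ) * q2 + (t3 : ℤ) * q3, ⟨t2, t3, by ring⟩,
        (t1 : ℤ), ⟨t1, 0, by push_cast; ring⟩, by rw [ca2, ca3]; ring⟩
    · rintro ⟨x, ⟨s2, s3, rfl⟩, y, ⟨c, d, rfl⟩, rfl⟩
      exact ⟨c + d, s2, s3, by rw [ca2, ca3]; push_cast; ring⟩
  have symT : ∀ n : ℤ, n ∈ TG a1 a2 a3 ↔
      ((E:ℤ) * ((q2:ℤ) * q3 - q2 - q3) + (a1:ℤ) * (-1) + (E:ℤ) * a1) - n
        ∉ TG a1 a2 a3 := fun n => by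
    rw [hTGeq]; exact hsymT0 n
  -- zero membership and nonnegativity
  have h0S : (0 : ℤ) ∈ SG a1 a2 a3 a4 := ⟨0, 0, 0, 0, by norm_num⟩
  have hnnS : ∀ s ∈ SG a1 a2 a3 a4, 0 ≤ s := by
    rintro s ⟨t1, t2, t3, t4, rfl⟩; positivity
  have h0T : (0 : ℤ) ∈ TG a1 a2 a3 := ⟨0, 0, 0, by norm_num⟩
  have hnnT : ∀ s ∈ TG a1 a2 a3, 0 ≤ s := by
    rintro s ⟨t1, t2, t3, rfl⟩; positivity
  obtain ⟨hisgS, hoddS, hcardS⟩ := sym_final h0S hnnS symS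
  obtain ⟨hisgT, _, _⟩ := sym_final h0T hnnT symT
  have hgTval : gT = (E:ℤ) * ((q2:ℤ) * q3 - q2 - q3) + (a1:ℤ) * (-1) + (E:ℤ) * a1 :=
    hgT.unique hisgT
  have cq1sub : ((q1 - 1 : ℕ) : ℤ) = (q1 : ℤ) - 1 := by
    rw [Nat.cast_sub hq1p]; norm_num
  refine ⟨_, hisgS, hoddS, hcardS, ?_, ?_⟩
  · rw [hgTval, cq1sub, ca1, cD, cE]; ring
  · rw [ca1, ca2, ca4, cD, cE]; ring
end

section
/- Let S be a unitary numerical semigroup generated by {a1,a2,a3,a4}, with a1=q1D, a2=q2E, a3=q3E, a4=q4D, and T = ⟨a1,a2,a3⟩. Define B1 = {t1a1+t4a4 : 1≤t4≤q1−1, 0≤t1≤t4−1}, B2 = {t1a1+t2a2+t4a4 : 1≤t2≤q3, 1≤t4≤q1−1, 0≤t1≤t4−1}, B3 = {t1a1+t3a3+t4a4 : 1≤t3≤q2−1, 1≤t4≤q1−1, 0≤t1≤t4−1}. Then S \ T = B1 ∪ B2 ∪ B3. -/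
def B1 (a1 a4 q1 : ℕ) : Set ℤ :=
  {x | ∃ t1 t4 : ℕ, 1 ≤ t4 ∧ t4 ≤ q1 - 1 ∧ t1 ≤ t4 - 1 ∧ x = t1 * a1 + t4 * a4}

def B2 (a1 a2 a4 q1 q3 : ℕ) : Set ℤ :=
  {x | ∃ t1 t2 t4 : ℕ, 1 ≤ t2 ∧ t2 ≤ q3 ∧ 1 ≤ t4 ∧ t4 ≤ q1 - 1 ∧ t1 ≤ t4 - 1 ∧
    x = t1 * a1 + t2 * a2 + t4 * a4}

def B3 (a1 a3 a4 q1 q2 : ℕ) : Set ℤ :=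
  {x | ∃ t1 t3 t4 : ℕ, 1 ≤ t3 ∧ t3 ≤ q2 - 1 ∧ 1 ≤ t4 ∧ t4 ≤ q1 - 1 ∧ t1 ≤ t4 - 1 ∧
    x = t1 * a1 + t3 * a3 + t4 * a4}

lemma key1 (a b E x s : ℤ) (ha : 1 ≤ a) (hb : 1 ≤ b) (hE : E = a + b)
    (hx0 : 0 ≤ x) (hxE : x < E) :
    min 0 (b - x) ≤ s * a + max 0 (-(x + s * E)) := by
  rcases le_or_gt 0 s with hs | hs
  · have h1 : 0 ≤ s * a := mul_nonneg hs (by linarith)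
    have h2 : min (0:ℤ) (b-x) ≤ 0 := min_le_left _ _
    have h3 : (0:ℤ) ≤ max 0 (-(x + s*E)) := le_max_left _ _
    linarith
  · have hs1 : s ≤ -1 := by omega
    have h2 : -(x + s*E) ≤ max 0 (-(x+s*E)) := le_max_right _ _
    have h3 : min (0:ℤ) (b-x) ≤ b - x := min_le_right _ _
    have h4 : b ≤ (-s) * b := by nlinarith
    nlinarith

lemma uniq (A1 A2 M D E q1 q2 : ℤ) (hDpos : 0 < D) (hEpos : 0 < E)
    (hA1 : A1 = q1 * D) (hA2 : A2 = q2 * E) (hM : M = D * E)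
    (c1 : IsCoprime q1 E) (c2 : IsCoprime q2 D) (cDE : IsCoprime D E)
    (x y k x' y' k' : ℤ) (hx : 0 ≤ x) (hxE : x < E) (hx' : 0 ≤ x') (hx'E : x' < E)
    (hy : 0 ≤ y) (hyD : y < D) (hy' : 0 ≤ y') (hy'D : y' < D)
    (heq : x*A1 + y*A2 + k*M = x'*A1 + y'*A2 + k'*M) : x = x' ∧ y = y' ∧ k = k' := by
  have hEq1D : IsCoprime E (q1 * D) := (c1.symm.mul_right cDE.symm)
  have hdvd : E ∣ (x - x') * (q1 * D) := by
    refine ⟨(y' - y) * q2 + (k' - k) * D, ?_⟩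
    have : x * (q1*D) + y * (q2*E) + k * (D*E) = x' * (q1*D) + y' * (q2*E) + k' * (D*E) := by
      rw [← hA1, ← hA2, ← hM]; exact heq
    ring_nf
    ring_nf at this
    linarith
  have hExx : E ∣ (x - x') := hEq1D.dvd_of_dvd_mul_right hdvd
  obtain ⟨c, hc⟩ := hExx
  have hc0 : c = 0 := by
    rcases lt_trichotomy c 0 with h | h | h
    · have : E * c ≤ E * (-1) := mul_le_mul_of_nonneg_left (by omega) (le_of_lt hEpos)
      linarith
    · exact h
    · have : E * 1 ≤ E * c := mul_le_mul_of_nonneg_left (by omega) (le_of_lt hEpos)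
      linarith
  have hxx : x = x' := by rw [hc0, mul_zero] at hc; linarith
  subst hxx
  have heq2 : (y - y') * q2 * E = (k' - k) * D * E := by
    have : x * (q1*D) + y * (q2*E) + k * (D*E) = x * (q1*D) + y' * (q2*E) + k' * (D*E) := by
      rw [← hA1, ← hA2, ← hM]; exact heq
    ring_nf at this ⊢
    linarith
  have heq3 : (y - y') * q2 = (k' - k) * D :=
    mul_right_cancel₀ (ne_of_gt hEpos) heq2
  have hdvd2 : D ∣ (y - y') * q2 := ⟨k' - k, by linarith [heq3]⟩
  have hDyy : D ∣ (y - y') := (c2.symm).dvd_of_dvd_mul_right hdvd2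
  obtain ⟨c, hc⟩ := hDyy
  have hc0 : c = 0 := by
    rcases lt_trichotomy c 0 with h | h | h
    · have : D * c ≤ D * (-1) := mul_le_mul_of_nonneg_left (by omega) (le_of_lt hDpos)
      linarith
    · exact h
    · have : D * 1 ≤ D * c := mul_le_mul_of_nonneg_left (by omega) (le_of_lt hDpos)
      linarith
  have hyy : y = y' := by rw [hc0, mul_zero] at hc; linarith
  subst hyy
  refine ⟨rfl, rfl, ?_⟩
  have hk : k * M = k' * M := by linarith
  have hM0 : M ≠ 0 := by rw [hM]; positivity
  exact mul_right_cancel₀ hM0 hk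

set_option maxHeartbeats 3200000 in
theorem stmt_12 (a1 a2 a3 a4 D E q1 q2 q3 q4 : ℕ)
(h1 : 0 < a1) (h12 : a1 < a2) (h23 : a2 < a3) (h34 : a3 < a4)
    (hgcd : Nat.gcd (Nat.gcd a1 a2) (Nat.gcd a3 a4) = 1)
    (hd12 : ¬ a1 ∣ a2) (hd13 : ¬ a1 ∣ a3) (hd14 : ¬ a1 ∣ a4)
    (hd23 : ¬ a2 ∣ a3) (hd24 : ¬ a2 ∣ a4) (hd34 : ¬ a3 ∣ a4)
    (hsum : a1 + a4 = a2 + a3)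
(hD : D = Nat.gcd a1 a4) (hE : E = Nat.gcd a2 a3)
    (hq1 : a1 = q1 * D) (hq2 : a2 = q2 * E) (hq3 : a3 = q3 * E) (hq4 : a4 = q4 * D)
    (hu : a1 + a4 = Nat.gcd a1 a4 * Nat.gcd a2 a3) :
    SG a1 a2 a3 a4 \ TG a1 a2 a3
      = B1 a1 a4 q1 ∪ B2 a1 a2 a4 q1 q3 ∪ B3 a1 a3 a4 q1 q2 := by
  have Dpos : 0 < D := by rw [hD]; exact Nat.gcd_pos_of_pos_left _ h1
  have Epos : 0 < E := by rw [hE]; exact Nat.gcd_pos_of_pos_left _ (by omega)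
  have hDE : a1 + a4 = D * E := by rw [hD, hE]; exact hu
  have hq14 : q1 + q4 = E := by
    apply Nat.eq_of_mul_eq_mul_right Dpos
    calc (q1+q4)*D = a1 + a4 := by rw [hq1, hq4]; ring
    _ = E * D := by rw [hDE]; ring
  have hq23 : q2 + q3 = D := by
    apply Nat.eq_of_mul_eq_mul_right Epos
    calc (q2+q3)*E = a2 + a3 := by rw [hq2, hq3]; ring
    _ = D * E := by rw [← hsum, hDE]
  have hq1pos : 0 < q1 := by
    rcases Nat.eq_zero_or_pos q1 with h|h
    · simp [h] at hq1; omega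
    · exact h
  have hq2pos : 0 < q2 := by
    rcases Nat.eq_zero_or_pos q2 with h|h
    · simp [h] at hq2; omega
    · exact h
  have hq1two : 2 ≤ q1 := by
    by_contra h
    have hq11 : q1 = 1 := by omega
    exact hd14 ⟨q4, by rw [hq4, hq1, hq11]; ring⟩
  have hq2two : 2 ≤ q2 := by
    by_contra h
    have hq21 : q2 = 1 := by omega
    exact hd23 ⟨q3, by rw [hq3, hq2, hq21]; ring⟩
  have hq14lt : q1 < q4 := by
    have h : q1 * D < q4 * D := by rw [← hq1, ← hq4]; omega
    exact lt_of_mul_lt_mul_right h (Nat.zero_le D)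
  have hq23lt : q2 < q3 := by
    have h : q2 * E < q3 * E := by rw [← hq2, ← hq3]; omega
    exact lt_of_mul_lt_mul_right h (Nat.zero_le E)
  have cop14 : Nat.Coprime q1 q4 := by
    have h : Nat.gcd q1 q4 * D = 1 * D := by
      rw [one_mul]
      have h2 : Nat.gcd (q1*D) (q4*D) = Nat.gcd q1 q4 * D := Nat.gcd_mul_right _ _ _
      rw [← hq1, ← hq4] at h2
      rw [← h2, ← hD]
    exact Nat.eq_of_mul_eq_mul_right Dpos h
  have cop23 : Nat.Coprime q2 q3 := by
    have h : Nat.gcd q2 q3 * E = 1 * E := by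
      rw [one_mul]
      have h2 : Nat.gcd (q2*E) (q3*E) = Nat.gcd q2 q3 * E := Nat.gcd_mul_right _ _ _
      rw [← hq2, ← hq3] at h2
      rw [← h2, ← hE]
    exact Nat.eq_of_mul_eq_mul_right Epos h
  have copDE : Nat.Coprime D E := by
    have hda1 : D ∣ a1 := ⟨q1, by rw [hq1]; ring⟩
    have hda4 : D ∣ a4 := ⟨q4, by rw [hq4]; ring⟩
    have hea2 : E ∣ a2 := ⟨q2, by rw [hq2]; ring⟩
    have hea3 : E ∣ a3 := ⟨q3, by rw [hq3]; ring⟩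
    have h1' : Nat.gcd D E ∣ Nat.gcd a1 a2 :=
      Nat.dvd_gcd ((Nat.gcd_dvd_left D E).trans hda1) ((Nat.gcd_dvd_right D E).trans hea2)
    have h2' : Nat.gcd D E ∣ Nat.gcd a3 a4 :=
      Nat.dvd_gcd ((Nat.gcd_dvd_right D E).trans hea3) ((Nat.gcd_dvd_left D E).trans hda4)
    have h3' := Nat.dvd_gcd h1' h2'
    rw [hgcd] at h3'
    exact Nat.dvd_one.mp h3'
  have zDpos : (0:ℤ) < D := by exact_mod_cast Dpos
  have zEpos : (0:ℤ) < E := by exact_mod_cast Epos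
  have zhq1 : (a1:ℤ) = q1 * D := by exact_mod_cast hq1
  have zhq2 : (a2:ℤ) = q2 * E := by exact_mod_cast hq2
  have zE : (E:ℤ) = q1 + q4 := by exact_mod_cast hq14.symm
  have zD : (D:ℤ) = q2 + q3 := by exact_mod_cast hq23.symm
  have zM : (a1:ℤ) + a4 = D * E := by exact_mod_cast hDE
  have hA4 : (a4:ℤ) = D*E - a1 := by linarith
  have hA3 : (a3:ℤ) = D*E - a2 := by
    have h : (a1:ℤ) + a4 = a2 + a3 := by exact_mod_cast hsum
    linarith
  have hEA1 : (E:ℤ) * a1 = q1 * ((D:ℤ)*E) := by rw [zhq1]; ring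
  have hDA2 : (D:ℤ) * a2 = q2 * ((D:ℤ)*E) := by rw [zhq2]; ring
  have c1 : IsCoprime (q1:ℤ) (E:ℤ) := by
    rw [zE]
    simpa [mul_one, add_comm] using (Nat.isCoprime_iff_coprime.mpr cop14).add_mul_left_right 1
  have c2 : IsCoprime (q2:ℤ) (D:ℤ) := by
    rw [zD]
    simpa [mul_one, add_comm] using (Nat.isCoprime_iff_coprime.mpr cop23).add_mul_left_right 1
  have cDE : IsCoprime (D:ℤ) (E:ℤ) := Nat.isCoprime_iff_coprime.mpr copDE
  have memT : ∀ x y k : ℤ, 0 ≤ x → 0 ≤ y + k → 0 ≤ k →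
      x*(a1:ℤ) + y*(a2:ℤ) + k*((D:ℤ)*E) ∈ TG a1 a2 a3 := by
    intro x y k hx hyk hk
    refine ⟨x.toNat, (y+k).toNat, k.toNat, ?_⟩
    push_cast [Int.toNat_of_nonneg hx, Int.toNat_of_nonneg hyk, Int.toNat_of_nonneg hk]
    linear_combination (-k) * hA3
  ext v
  simp only [Set.mem_diff, Set.mem_union]
  constructor
  · rintro ⟨⟨t1, t2, t3, t4, hv⟩, hvT⟩
    have hvz : v = ((t1:ℤ) - t4) * a1 + ((t2:ℤ) - t3) * a2 + ((t3:ℤ) + t4) * ((D:ℤ)*E) := by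
      rw [hv]; linear_combination (t3:ℤ) * hA3 + (t4:ℤ) * hA4
    set X : ℤ := (t1:ℤ) - t4 with hX
    set Y : ℤ := (t2:ℤ) - t3 with hY
    set K : ℤ := (t3:ℤ) + t4 with hK
    set σ : ℤ := X / E with hσ
    set xb : ℤ := X % E with hxb
    set τ : ℤ := Y / D with hτ
    set yb : ℤ := Y % D with hyb
    set κ : ℤ := K + σ * q1 + τ * q2 with hκ
    have hxb0 : 0 ≤ xb := Int.emod_nonneg _ (ne_of_gt zEpos)
    have hxbE : xb < E := Int.emod_lt_of_pos _ zEpos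
    have hyb0 : 0 ≤ yb := Int.emod_nonneg _ (ne_of_gt zDpos)
    have hybD : yb < D := Int.emod_lt_of_pos _ zDpos
    have e1 : X = (E:ℤ) * σ + xb := (Int.mul_ediv_add_emod X E).symm
    have e2 : Y = (D:ℤ) * τ + yb := (Int.mul_ediv_add_emod Y D).symm
    have hvcan : v = xb*(a1:ℤ) + yb*(a2:ℤ) + κ*((D:ℤ)*E) := by
      rw [hvz, hκ]
      linear_combination (a1:ℤ) * e1 + (a2:ℤ) * e2 + σ * hEA1 + τ * hDA2
    have hKb : max 0 (-X) + max 0 (-Y) ≤ K := by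
      rw [hX, hY, hK]; omega
    have k1 := key1 (q1:ℤ) (q4:ℤ) (E:ℤ) xb σ (by exact_mod_cast hq1pos)
      (by exact_mod_cast (hq1pos.trans hq14lt)) zE hxb0 hxbE
    have k2 := key1 (q2:ℤ) (q3:ℤ) (D:ℤ) yb τ (by exact_mod_cast hq2pos)
      (by exact_mod_cast (hq2pos.trans hq23lt)) zD hyb0 hybD
    have ex1 : xb + σ * E = X := by linarith
    have ex2 : yb + τ * D = Y := by linarith
    rw [ex1] at k1
    rw [ex2] at k2
    have hκS : min 0 ((q4:ℤ) - xb) + min 0 ((q3:ℤ) - yb) ≤ κ := by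
      rw [hκ]; linarith
    have hκ1 : κ ≤ -1 := by
      by_contra h
      push_neg at h
      exact hvT (by rw [hvcan]; exact memT xb yb κ hxb0 (by linarith) (by linarith))
    have hκ2 : κ ≤ (q3:ℤ) - yb - 1 := by
      by_contra h
      push_neg at h
      apply hvT
      have hv2 : v = xb*(a1:ℤ) + (yb - D)*(a2:ℤ) + (κ + q2)*((D:ℤ)*E) := by
        rw [hvcan]; linear_combination hDA2
      rw [hv2]
      exact memT xb (yb - D) (κ + q2) hxb0 (by linarith) (by linarith)
    have hxbge : (q4:ℤ) + 1 ≤ xb := by omega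
    rcases le_or_gt yb (q3:ℤ) with hyq | hyq
    · have hκ3 : (q4:ℤ) - xb ≤ κ := by omega
      set kt : ℤ := κ + q1 with hkt
      have hj1 : 1 ≤ (E:ℤ) - xb := by linarith
      have hjkt : (E:ℤ) - xb ≤ kt := by rw [hkt, zE]; linarith
      have hkt2 : kt ≤ (q1:ℤ) - 1 := by rw [hkt]; linarith
      have hktpos : 1 ≤ kt := by linarith
      have hvB : v = (kt - ((E:ℤ) - xb))*(a1:ℤ) + yb*(a2:ℤ) + kt*(a4:ℤ) := by
        rw [hvcan, hkt]; linear_combination hEA1 - (κ + (q1:ℤ)) * hA4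
      rcases eq_or_lt_of_le hyb0 with hy0 | hy0
      · left; left
        refine ⟨(kt - ((E:ℤ) - xb)).toNat, kt.toNat, by omega, by omega, by omega, ?_⟩
        push_cast [Int.toNat_of_nonneg (by linarith : (0:ℤ) ≤ kt - ((E:ℤ) - xb)),
          Int.toNat_of_nonneg (by linarith : (0:ℤ) ≤ kt)]
        rw [hvB, ← hy0]; ring
      · left; right
        refine ⟨(kt - ((E:ℤ) - xb)).toNat, yb.toNat, kt.toNat, by omega, by omega, by omega,
          by omega, by omega, ?_⟩
        push_cast [Int.toNat_of_nonneg (by linarith : (0:ℤ) ≤ kt - ((E:ℤ) - xb)),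
          Int.toNat_of_nonneg (by linarith : (0:ℤ) ≤ kt), Int.toNat_of_nonneg hyb0]
        linear_combination hvB
    · have hκ3 : (q4:ℤ) - xb + ((q3:ℤ) - yb) ≤ κ := by omega
      set kt : ℤ := κ + q1 + yb - q3 with hkt
      have hj1 : 1 ≤ (E:ℤ) - xb := by linarith
      have hjkt : (E:ℤ) - xb ≤ kt := by rw [hkt, zE]; linarith
      have hkt2 : kt ≤ (q1:ℤ) - 1 := by rw [hkt]; linarith
      have hktpos : 1 ≤ kt := by linarith
      have ht3a : 1 ≤ (D:ℤ) - yb := by linarith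
      have ht3b : (D:ℤ) - yb ≤ (q2:ℤ) - 1 := by rw [zD]; linarith
      have hvB : v = (kt - ((E:ℤ) - xb))*(a1:ℤ) + ((D:ℤ) - yb)*(a3:ℤ) + kt*(a4:ℤ) := by
        rw [hvcan, hkt]
        linear_combination hEA1 + hDA2 - (κ + (q1:ℤ) + yb - q3) * hA4 - ((D:ℤ) - yb) * hA3 - (D:ℤ)*(E:ℤ)*zD
      right
      refine ⟨(kt - ((E:ℤ) - xb)).toNat, ((D:ℤ) - yb).toNat, kt.toNat, by omega, by omega,
        by omega, by omega, by omega, ?_⟩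
      push_cast [Int.toNat_of_nonneg (by linarith : (0:ℤ) ≤ kt - ((E:ℤ) - xb)),
        Int.toNat_of_nonneg (by linarith : (0:ℤ) ≤ kt),
        Int.toNat_of_nonneg (by linarith : (0:ℤ) ≤ (D:ℤ) - yb)]
      linear_combination hvB
  · intro hB
    have noT : ∀ xb yb κb : ℤ, 0 ≤ xb → xb < E → 0 ≤ yb → yb < D → κb ≤ -1 →
        κb ≤ (q3:ℤ) - yb - 1 → v = xb*(a1:ℤ) + yb*(a2:ℤ) + κb*((D:ℤ)*E) →
        v ∉ TG a1 a2 a3 := by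
      intro xb yb κb hxb0 hxbE hyb0 hybD hκb1 hκb2 hvcanB
      rintro ⟨s1, s2, s3, hs⟩
      have hvt : v = (s1:ℤ)*(a1:ℤ) + ((s2:ℤ) - s3)*(a2:ℤ) + (s3:ℤ)*((D:ℤ)*E) := by
        rw [hs]; linear_combination (s3:ℤ) * hA3
      set Xt : ℤ := (s1:ℤ) with hXt
      set Yt : ℤ := (s2:ℤ) - s3 with hYt
      set σ' : ℤ := Xt / E with hσ'
      set xb' : ℤ := Xt % E with hxb'
      set τ' : ℤ := Yt / D with hτ'
      set yb' : ℤ := Yt % D with hyb'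
      set κ' : ℤ := (s3:ℤ) + σ' * q1 + τ' * q2 with hκ'
      have hxb'0 : 0 ≤ xb' := Int.emod_nonneg _ (ne_of_gt zEpos)
      have hxb'E : xb' < E := Int.emod_lt_of_pos _ zEpos
      have hyb'0 : 0 ≤ yb' := Int.emod_nonneg _ (ne_of_gt zDpos)
      have hyb'D : yb' < D := Int.emod_lt_of_pos _ zDpos
      have e1 : Xt = (E:ℤ) * σ' + xb' := (Int.mul_ediv_add_emod Xt E).symm
      have e2 : Yt = (D:ℤ) * τ' + yb' := (Int.mul_ediv_add_emod Yt D).symm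
      have hσ'0 : 0 ≤ σ' := Int.ediv_nonneg (by rw [hXt]; positivity) (le_of_lt zEpos)
      have hvcan' : v = xb'*(a1:ℤ) + yb'*(a2:ℤ) + κ'*((D:ℤ)*E) := by
        rw [hvt, hκ']
        linear_combination (a1:ℤ) * e1 + (a2:ℤ) * e2 + σ' * hEA1 + τ' * hDA2
      have k2 := key1 (q2:ℤ) (q3:ℤ) (D:ℤ) yb' τ' (by exact_mod_cast hq2pos)
        (by exact_mod_cast (hq2pos.trans hq23lt)) zD hyb'0 hyb'D
      have ex2 : yb' + τ' * D = Yt := by linarith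
      rw [ex2] at k2
      have hs3b : max 0 (-Yt) ≤ (s3:ℤ) := by rw [hYt]; omega
      have hσq : 0 ≤ σ' * q1 := mul_nonneg hσ'0 (by positivity)
      have hκ'b : min 0 ((q3:ℤ) - yb') ≤ κ' := by rw [hκ']; linarith
      obtain ⟨hxx, hyy, hkk⟩ := uniq (a1:ℤ) (a2:ℤ) ((D:ℤ)*E) (D:ℤ) (E:ℤ) (q1:ℤ) (q2:ℤ)
        zDpos zEpos zhq1 zhq2 rfl c1 c2 cDE xb yb κb xb' yb' κ'
        hxb0 hxbE hxb'0 hxb'E hyb0 hybD hyb'0 hyb'D (by rw [← hvcanB, ← hvcan'])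
      omega
    rcases hB with ((⟨t1, t4, ht4a, ht4b, ht1, hveq⟩ |
        ⟨t1, t2, t4, ht2a, ht2b, ht4a, ht4b, ht1, hveq⟩) |
        ⟨t1, t3, t4, ht3a, ht3b, ht4a, ht4b, ht1, hveq⟩)
    · constructor
      · exact ⟨t1, 0, 0, t4, by rw [hveq]; push_cast; ring⟩
      · refine noT ((E:ℤ) - (t4:ℤ) + t1) 0 ((t4:ℤ) - q1) (by omega) (by omega) le_rfl zDpos
          (by omega) (by omega) ?_
        rw [hveq]
        linear_combination (t4:ℤ) * hA4 - hEA1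
    · constructor
      · exact ⟨t1, t2, 0, t4, by rw [hveq]; push_cast; ring⟩
      · refine noT ((E:ℤ) - (t4:ℤ) + t1) (t2:ℤ) ((t4:ℤ) - q1) (by omega) (by omega)
          (by positivity) (by omega) (by omega) (by omega) ?_
        rw [hveq]
        linear_combination (t4:ℤ) * hA4 - hEA1
    · constructor
      · exact ⟨t1, 0, t3, t4, by rw [hveq]; push_cast; ring⟩
      · refine noT ((E:ℤ) - (t4:ℤ) + t1) ((D:ℤ) - t3) ((t3:ℤ) + t4 - q1 - q2) (by omega)
          (by omega) (by omega) (by omega) (by omega) (by omega) ?_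
        rw [hveq]
        linear_combination (t3:ℤ) * hA3 + (t4:ℤ) * hA4 - hEA1 - hDA2
end
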